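/- arXiv:math/0410111 — 3 statements merged into one kernel-verified Lean document; each statement's English description precedes it below -/
import Mathlib

section
/- Given positive integers a, b, c, there exists a positive integer x < c with x² ≡ a (mod b) if and only if the minimum of the polynomial (x² − a − b·y)² over the integer points (x, y) with 1 ≤ x ≤ c−1 and (1−a)/b ≤ y ≤ ((c−1)² − a)/b is zero. -/
theorem stmt_7 (a b c : ℤ) (ha : 0 < a) (hb : 0 < b) (hc : 0 < c) :
    (∃ x : ℤ, 0 < x ∧ x < c ∧ b ∣ (x ^ 2 - a)) ↔
    (∃ x y : ℤ, 1 ≤ x ∧ x ≤ c - 1 ∧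
      ((1 - a : ℚ) / b ≤ (y : ℚ)) ∧ ((y : ℚ) ≤ (((c : ℚ) - 1) ^ 2 - a) / b) ∧
      (x ^ 2 - a - b * y) ^ 2 = 0) := by
  have hbQ : (0 : ℚ) < (b : ℚ) := by exact_mod_cast hb
  constructor
  · rintro ⟨x, hx0, hxc, ⟨y, hy⟩⟩
    refine ⟨x, y, hx0, by omega, ?_, ?_, ?_⟩
    · rw [div_le_iff₀ hbQ]
      have h1 : (1 : ℤ) - a ≤ b * y := by nlinarith [sq_nonneg x]
      have := (Int.cast_le (R := ℚ)).2 h1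
      push_cast at this ⊢
      linarith
    · rw [le_div_iff₀ hbQ]
      have h1 : b * y ≤ (c - 1) ^ 2 - a := by nlinarith
      have := (Int.cast_le (R := ℚ)).2 h1
      push_cast at this ⊢
      linarith
    · rw [← hy]; ring
  · rintro ⟨x, y, hx1, hxc, _, _, heq⟩
    refine ⟨x, by omega, by omega, ⟨y, ?_⟩⟩
    have := pow_eq_zero_iff (n := 2) (by norm_num) |>.1 heq
    linarith
end

section
/- Let f ∈ ℤ[x₁,…,x₉]. Consider minimizing y over all (y, x₁,…,x₉) ∈ ℤ≥0^10 satisfying (1−y)·f(x₁,…,x₉) = 0. The feasible set is nonempty, the minimum value attained by y is 0 if f has a non-negative integer zero, and is 1 otherwise. -/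
theorem stmt_8 (f : MvPolynomial (Fin 9) ℤ) :
    let V : Set ℤ := {y : ℤ | 0 ≤ y ∧ ∃ x : Fin 9 → ℤ, (∀ i, 0 ≤ x i) ∧
      (1 - y) * MvPolynomial.eval x f = 0}
    V.Nonempty ∧
    ((∃ x : Fin 9 → ℤ, (∀ i, 0 ≤ x i) ∧ MvPolynomial.eval x f = 0) →
      IsLeast V 0) ∧
    (¬ (∃ x : Fin 9 → ℤ, (∀ i, 0 ≤ x i) ∧ MvPolynomial.eval x f = 0) →
      IsLeast V 1) := by
  intro V
  refine ⟨⟨1, by norm_num, fun _ => 0, fun i => le_refl 0, by ring⟩, ?_, ?_⟩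
  · rintro ⟨x, hx, hfx⟩
    exact ⟨⟨le_refl 0, x, hx, by rw [hfx]; ring⟩, fun y hy => hy.1⟩
  · intro h
    refine ⟨⟨by norm_num, fun _ => 0, fun i => le_refl 0, by ring⟩, ?_⟩
    rintro y ⟨hy, x, hx, hfx⟩
    by_contra hlt
    push_neg at hlt
    interval_cases y
    simp at hfx
    exact h ⟨x, hx, hfx⟩
end

section
/- Let P ⊂ ℝ^d be a bounded set with P ∩ ℤ^d nonempty, and f : ℝ^d → ℝ a polynomial that is non-negative on P. Set f* = max{f(α) : α ∈ P ∩ ℤ^d} and N = |P ∩ ℤ^d|. For 0 < ε ≤ 1 and k = ⌈(1+1/ε)·log N⌉ (taking k = 1 when N = 1), the value L_k = ((∑_{α∈P∩ℤ^d} f(α)^k)/N)^(1/k) satisfies (1−ε)·f* ≤ L_k ≤ f*. -/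
theorem stmt_13 (d : ℕ) (P : Set (Fin d → ℝ)) (hbdd : Bornology.IsBounded P)
    (p : MvPolynomial (Fin d) ℝ)
    (f : (Fin d → ℝ) → ℝ) (hf : ∀ x, f x = MvPolynomial.eval x p)
    (hnonneg : ∀ x ∈ P, 0 ≤ f x)
    (L : Set (Fin d → ℤ)) (hLdef : L = {α : Fin d → ℤ | (fun i => (α i : ℝ)) ∈ P})
    (hfin : L.Finite) (hne : L.Nonempty)
    (fstar : ℝ)
    (hstar : IsGreatest ((fun α : Fin d → ℤ => f (fun i => (α i : ℝ))) '' L) fstar)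
    (N : ℕ) (hN : N = hfin.toFinset.card)
    (ε : ℝ) (hε0 : 0 < ε) (hε1 : ε ≤ 1)
    (k : ℕ) (hk : k = max 1 ⌈(1 + 1 / ε) * Real.log (N : ℝ)⌉₊) :
    (1 - ε) * fstar ≤
      ((∑ α ∈ hfin.toFinset, f (fun i => (α i : ℝ)) ^ k) / (N : ℝ)) ^ ((k : ℝ)⁻¹) ∧
    ((∑ α ∈ hfin.toFinset, f (fun i => (α i : ℝ)) ^ k) / (N : ℝ)) ^ ((k : ℝ)⁻¹)
      ≤ fstar := by
  have hSne : hfin.toFinset.Nonempty := hfin.toFinset_nonempty.mpr hne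
  have hNpos : 0 < N := hN ▸ Finset.card_pos.mpr hSne
  have hNR : (0:ℝ) < (N:ℝ) := by exact_mod_cast hNpos
  have hN1 : (1:ℝ) ≤ (N:ℝ) := by exact_mod_cast hNpos
  have hk1 : 1 ≤ k := hk ▸ le_max_left _ _
  have hkR : (0:ℝ) < (k:ℝ) := by exact_mod_cast hk1
  have hk0 : (k:ℝ) ≠ 0 := ne_of_gt hkR
  have hg0 : ∀ α ∈ hfin.toFinset, 0 ≤ f (fun i => (α i : ℝ)) := by
    intro α hα
    have hmem : α ∈ L := hfin.mem_toFinset.mp hα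
    rw [hLdef] at hmem
    exact hnonneg _ hmem
  have hgle : ∀ α ∈ hfin.toFinset, f (fun i => (α i : ℝ)) ≤ fstar := by
    intro α hα
    exact hstar.2 ⟨α, hfin.mem_toFinset.mp hα, rfl⟩
  have hfstar0 : 0 ≤ fstar := by
    obtain ⟨α, hα⟩ := hSne
    exact le_trans (hg0 α hα) (hgle α hα)
  set A : ℝ := ∑ α ∈ hfin.toFinset, f (fun i => (α i : ℝ)) ^ k with hA
  have hA0 : 0 ≤ A := Finset.sum_nonneg fun α hα => pow_nonneg (hg0 α hα) k
  -- upper bound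
  have hupper : (A / (N:ℝ)) ^ ((k:ℝ)⁻¹) ≤ fstar := by
    have h1 : A ≤ (N:ℝ) * fstar ^ k := by
      calc A ≤ ∑ _α ∈ hfin.toFinset, fstar ^ k :=
            Finset.sum_le_sum fun α hα => pow_le_pow_left₀ (hg0 α hα) (hgle α hα) k
        _ = (N:ℝ) * fstar ^ k := by
            rw [Finset.sum_const, nsmul_eq_mul, hN]
    have h2 : A / (N:ℝ) ≤ fstar ^ k := by
      rw [div_le_iff₀ hNR]; linarith [h1]
    calc (A / (N:ℝ)) ^ ((k:ℝ)⁻¹) ≤ (fstar ^ k) ^ ((k:ℝ)⁻¹) :=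
          Real.rpow_le_rpow (div_nonneg hA0 hNR.le) h2 (by positivity)
      _ = fstar := by
          rw [← Real.rpow_natCast fstar k, ← Real.rpow_mul hfstar0,
            mul_inv_cancel₀ hk0, Real.rpow_one]
  -- lower bound
  have hlower : (1 - ε) * fstar ≤ (A / (N:ℝ)) ^ ((k:ℝ)⁻¹) := by
    -- fstar ^ k ≤ A
    obtain ⟨α₀, hα₀L, hα₀⟩ := hstar.1
    have hα₀S : α₀ ∈ hfin.toFinset := hfin.mem_toFinset.mpr hα₀L
    have hfA : fstar ^ k ≤ A := by
      have := Finset.single_le_sum (f := fun α => f (fun i => ((α i : ℝ))) ^ k)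
        (fun α hα => pow_nonneg (hg0 α hα) k) hα₀S
      have hα₀' : f (fun i => ((α₀ i : ℝ))) = fstar := hα₀
      rw [← hα₀']
      exact this
    -- (1-ε) ≤ N^{-1/k}
    have hceil : (1 + 1 / ε) * Real.log (N:ℝ) ≤ (k:ℝ) := by
      have h1 : ⌈(1 + 1 / ε) * Real.log (N : ℝ)⌉₊ ≤ k := hk ▸ le_max_right _ _
      have h2 : ((⌈(1 + 1 / ε) * Real.log (N : ℝ)⌉₊ : ℕ) : ℝ) ≤ (k:ℝ) := by
        exact_mod_cast h1
      exact le_trans (Nat.le_ceil _) h2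
    have hlogN0 : 0 ≤ Real.log (N:ℝ) := Real.log_nonneg hN1
    have hlogk : Real.log (N:ℝ) * (k:ℝ)⁻¹ ≤ ε := by
      rw [← div_eq_mul_inv, div_le_iff₀ hkR]
      have hinv : ε * (1 / ε) = 1 := by field_simp
      nlinarith [mul_le_mul_of_nonneg_left hceil hε0.le]
    have hexp : (1:ℝ) - ε ≤ ((N:ℝ) ^ ((k:ℝ)⁻¹))⁻¹ := by
      rw [Real.rpow_def_of_pos hNR, ← Real.exp_neg]
      calc (1:ℝ) - ε ≤ Real.exp (-ε) := by
            have := Real.add_one_le_exp (-ε); linarith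
        _ ≤ Real.exp (-(Real.log (N:ℝ) * (k:ℝ)⁻¹)) :=
            Real.exp_le_exp.mpr (by linarith)
    have hNrpos : (0:ℝ) < (N:ℝ) ^ ((k:ℝ)⁻¹) := Real.rpow_pos_of_pos hNR _
    calc (1 - ε) * fstar ≤ ((N:ℝ) ^ ((k:ℝ)⁻¹))⁻¹ * fstar :=
          mul_le_mul_of_nonneg_right hexp hfstar0
      _ = (fstar ^ k / (N:ℝ)) ^ ((k:ℝ)⁻¹) := by
          rw [Real.div_rpow (pow_nonneg hfstar0 k) hNR.le,
            ← Real.rpow_natCast fstar k, ← Real.rpow_mul hfstar0,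
            mul_inv_cancel₀ hk0, Real.rpow_one, div_eq_mul_inv, mul_comm]
      _ ≤ (A / (N:ℝ)) ^ ((k:ℝ)⁻¹) :=
          Real.rpow_le_rpow (by positivity) (by gcongr) (by positivity)
  exact ⟨hlower, hupper⟩
end
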